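/- arXiv:0912.4190 — 3 statements merged into one kernel-verified Lean document; each statement's English description precedes it below -/
import Mathlib

section
/- Let n ≥ 1 and let μ be a (locally finite, nonnegative) Borel measure on ℝⁿ such that for every t > 0 the pushforward of μ under the dilation x ↦ t x equals μ (equivalently ∫ f(t x) dμ(x) = ∫ f dμ for all nonnegative measurable f). Then μ is a nonnegative multiple of the Dirac measure at 0. -/
/-!
Dilation invariance makes `r ↦ μ (ball 0 r)` constant on `(0, ∞)`, so every ball about `0` has
the full mass `μ univ`, which local finiteness makes finite. Hence the complement of every ball
about `0` is null, and `μ` is concentrated at `0`.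
-/

open MeasureTheory Metric Set
open scoped ENNReal

namespace MeasureTheory.Measure

variable {E : Type*} [NormedAddCommGroup E] [NormedSpace ℝ E] [MeasurableSpace E]
  [BorelSpace E] {μ : Measure E}

theorem measure_ball_zero_smul (hinv : ∀ t : ℝ, 0 < t → μ.map (t • ·) = μ) {t : ℝ}
    (ht : 0 < t) (r : ℝ) : μ (ball 0 (t * r)) = μ (ball 0 r) := by
  have hpre : (t • ·) ⁻¹' ball (0 : E) (t * r) = ball 0 r := by
    rw [preimage_smul₀ ht.ne', _root_.smul_ball (inv_ne_zero ht.ne'), smul_zero, norm_inv,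
      Real.norm_of_nonneg ht.le, inv_mul_cancel_left₀ ht.ne']
  conv_lhs => rw [← hinv t ht]
  rw [map_apply (continuous_const_smul t).measurable measurableSet_ball, hpre]

theorem measure_ball_zero_eq_measure_univ (hinv : ∀ t : ℝ, 0 < t → μ.map (t • ·) = μ)
    {r : ℝ} (hr : 0 < r) : μ (ball 0 r) = μ univ := by
  have hball : ∀ n : ℕ, μ (ball 0 ((n : ℝ) + 1)) = μ (ball 0 r) := fun n => by
    rw [← measure_ball_zero_smul hinv (by positivity : 0 < ((n : ℝ) + 1) / r) r,
      div_mul_cancel₀ _ hr.ne']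
  rw [← iUnion_ball_nat_succ (0 : E),
    Monotone.measure_iUnion (fun m n h => ball_subset_ball (by gcongr)), iSup_congr hball,
    iSup_const]

theorem isFiniteMeasure_of_map_smul_eq [IsLocallyFiniteMeasure μ]
    (hinv : ∀ t : ℝ, 0 < t → μ.map (t • ·) = μ) : IsFiniteMeasure μ := by
  obtain ⟨U, hU, hμU⟩ := μ.finiteAt_nhds 0
  obtain ⟨r, hr, hrU⟩ := Metric.mem_nhds_iff.1 hU
  refine ⟨?_⟩
  rw [← measure_ball_zero_eq_measure_univ hinv hr]
  exact (measure_mono hrU).trans_lt hμU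

theorem ae_eq_zero_of_map_smul_eq [IsLocallyFiniteMeasure μ]
    (hinv : ∀ t : ℝ, 0 < t → μ.map (t • ·) = μ) : ∀ᵐ x ∂μ, x = 0 := by
  have := isFiniteMeasure_of_map_smul_eq hinv
  have hcompl : ∀ n : ℕ, μ (ball (0 : E) ((n : ℝ) + 1)⁻¹)ᶜ = 0 := fun n => by
    rw [measure_compl measurableSet_ball (measure_ne_top _ _),
      measure_ball_zero_eq_measure_univ hinv (by positivity), tsub_self]
  refine measure_mono_null (fun x (hx : x ≠ 0) => ?_) (measure_iUnion_null hcompl)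
  obtain ⟨n, hn⟩ := exists_nat_one_div_lt (norm_pos_iff.2 hx)
  simp only [mem_iUnion, mem_compl_iff, mem_ball_zero_iff, not_lt]
  exact ⟨n, by simpa using hn.le⟩

theorem eq_smul_dirac_of_ae_eq {α : Type*} [MeasurableSpace α]
    {μ : Measure α} {a : α} (h : ∀ᵐ x ∂μ, x = a) : μ = μ {a} • dirac a := by
  rw [← restrict_singleton, restrict_eq_self_of_ae_mem (s := {a}) h]

end MeasureTheory.Measure

theorem stmt7_general (n : ℕ) (μ : Measure (EuclideanSpace ℝ (Fin n)))
    [IsLocallyFiniteMeasure μ]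
    (hinv : ∀ t : ℝ, 0 < t →
      Measure.map (fun x : EuclideanSpace ℝ (Fin n) => t • x) μ = μ) :
    ∃ c : ℝ≥0∞, μ = c • Measure.dirac 0 :=
  ⟨μ {0}, Measure.eq_smul_dirac_of_ae_eq (Measure.ae_eq_zero_of_map_smul_eq hinv)⟩

/-- A locally finite Borel measure on `ℝⁿ` (`n ≥ 1`) invariant under all
dilations `x ↦ t x`, `t > 0`, is a nonnegative multiple of the Dirac measure at `0`. -/
theorem stmt7 (n : ℕ) (hn : 1 ≤ n) (μ : Measure (EuclideanSpace ℝ (Fin n)))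
    [IsLocallyFiniteMeasure μ]
    (hinv : ∀ t : ℝ, 0 < t →
      Measure.map (fun x : EuclideanSpace ℝ (Fin n) => t • x) μ = μ) :
    ∃ c : ℝ≥0∞, μ = c • Measure.dirac 0 :=
  stmt7_general n μ hinv
end

section
/- More generally, let p, q ≥ 0 with p + q ≥ 1 and let D_t(u,v) = (tu, t²v) be anisotropic dilations on ℝ^p × ℝ^q. If μ is a locally finite nonnegative Borel measure on ℝ^p × ℝ^q satisfying (D_t)_* μ = μ for all t > 0, then μ is a nonnegative multiple of the Dirac measure at the origin. -/
open MeasureTheory Set Filter Topology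
open scoped ENNReal

/-!
The homogeneous gauge `ρ(u, v) = max ‖u‖ √‖v‖` satisfies `ρ ∘ D_t = t ρ`, so invariance says
that the punctured balls `{0 < ρ < r}` all have the same measure. They shrink to the empty set
as `r → 0` and have finite measure by local finiteness, so that common measure is `0`.
Exhausting the complement of the origin by them gives `μ {0}ᶜ = 0`.
-/

theorem MeasureTheory.Measure.eq_smul_dirac_of_measure_compl_singleton_eq_zero {α : Type*}
    [MeasurableSpace α] [MeasurableSingletonClass α] {μ : Measure α} {a : α}
    (h : μ {a}ᶜ = 0) : μ = μ {a} • Measure.dirac a := by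
  rw [← Measure.restrict_singleton]
  exact (Measure.restrict_eq_self_of_ae_mem (mem_ae_iff.mpr h)).symm

theorem measure_preimage_Ioi_eq_zero_of_forall_measure_preimage_Ioo_eq {α : Type*}
    [MeasurableSpace α] {μ : Measure α} {ρ : α → ℝ} (hρ : Measurable ρ)
    (hfin : μ (ρ ⁻¹' Ioo 0 1) ≠ ∞)
    (hscale : ∀ r, 0 < r → μ (ρ ⁻¹' Ioo 0 r) = μ (ρ ⁻¹' Ioo 0 1)) :
    μ (ρ ⁻¹' Ioi 0) = 0 := by
  set s : ℕ → Set α := fun n => ρ ⁻¹' Ioo 0 (1 / (n + 1))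
  have hs_const : ∀ n, μ (s n) = μ (ρ ⁻¹' Ioo 0 1) := fun n => hscale _ (by positivity)
  have hs_anti : Antitone s := fun m n hmn => preimage_mono <| Ioo_subset_Ioo_right <|
    one_div_le_one_div_of_le (by positivity) (by gcongr)
  have hs_empty : ⋂ n, s n = ∅ := by
    refine eq_empty_of_forall_notMem fun x hx => ?_
    obtain ⟨hpos, -⟩ := mem_iInter.mp hx 0
    obtain ⟨n, hn⟩ := exists_nat_one_div_lt hpos
    exact (mem_iInter.mp hx n).2.not_gt hn
  have hlim : Tendsto (fun n => μ (s n)) atTop (𝓝 (μ (⋂ n, s n))) :=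
    tendsto_measure_iInter_atTop (fun n => (hρ measurableSet_Ioo).nullMeasurableSet)
      hs_anti ⟨0, hs_const 0 ▸ hfin⟩
  simp only [hs_empty, measure_empty, hs_const] at hlim
  have hunion : ρ ⁻¹' Ioi 0 = ⋃ n : ℕ, ρ ⁻¹' Ioo 0 (n + 1) := by
    ext x
    simpa using fun hx : 0 < ρ x => exists_nat_gt (ρ x) |>.imp fun n hn => by linarith
  rw [hunion]
  exact measure_iUnion_null fun n =>
    (hscale _ (by positivity)).trans (tendsto_const_nhds_iff.mp hlim)

section AnisotropicDilation

variable {E F : Type*} [NormedAddCommGroup E] [NormedAddCommGroup F]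

noncomputable def homGauge (x : E × F) : ℝ := max ‖x.1‖ √‖x.2‖

theorem continuous_homGauge : Continuous (homGauge (E := E) (F := F)) :=
  (continuous_norm.comp continuous_fst).max
    (Real.continuous_sqrt.comp (continuous_norm.comp continuous_snd))

theorem homGauge_pos_iff {x : E × F} : 0 < homGauge x ↔ x ≠ 0 := by
  simp [homGauge, Prod.ext_iff, or_iff_not_imp_left]

theorem norm_le_one_of_homGauge_le_one {x : E × F} (hx : homGauge x ≤ 1) : ‖x‖ ≤ 1 := by
  obtain ⟨h1, h2⟩ := max_le_iff.mp hx
  exact norm_prod_le_iff.mpr ⟨h1, Real.sqrt_le_one.mp h2⟩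

variable [NormedSpace ℝ E] [NormedSpace ℝ F]

def anisoDilation (t : ℝ) (x : E × F) : E × F := (t • x.1, t ^ 2 • x.2)

theorem continuous_anisoDilation (t : ℝ) : Continuous (anisoDilation (E := E) (F := F) t) :=
  (continuous_fst.const_smul t).prodMk (continuous_snd.const_smul _)

theorem homGauge_anisoDilation {t : ℝ} (ht : 0 ≤ t) (x : E × F) :
    homGauge (anisoDilation t x) = t * homGauge x := by
  simp only [homGauge, anisoDilation, norm_smul, Real.norm_eq_abs, abs_of_nonneg ht,
    abs_of_nonneg (pow_nonneg ht 2)]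
  rw [Real.sqrt_mul (by positivity), Real.sqrt_sq ht, mul_max_of_nonneg _ _ ht]

variable [MeasurableSpace E] [BorelSpace E] [MeasurableSpace F] [BorelSpace F]

theorem measure_homGauge_preimage_Ioo_eq [SecondCountableTopologyEither E F]
    {μ : Measure (E × F)}
    (hinv : ∀ t, 0 < t → μ.map (anisoDilation t) = μ) {r : ℝ} (hr : 0 < r) :
    μ (homGauge ⁻¹' Ioo 0 r) = μ (homGauge ⁻¹' Ioo 0 1) := by
  have hpre : anisoDilation r⁻¹ ⁻¹' (homGauge ⁻¹' Ioo 0 1) =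
      (homGauge ⁻¹' Ioo 0 r : Set (E × F)) := by
    ext x
    simp only [mem_preimage, mem_Ioo, homGauge_anisoDilation (inv_nonneg.mpr hr.le),
      inv_mul_eq_div, div_pos_iff_of_pos_right hr, div_lt_one hr]
  rw [← hpre, ← Measure.map_apply (continuous_anisoDilation _).measurable
    (continuous_homGauge.measurable measurableSet_Ioo), hinv _ (inv_pos.mpr hr)]

theorem measure_compl_zero_eq_zero_of_map_anisoDilation_eq [ProperSpace E] [ProperSpace F]
    {μ : Measure (E × F)} [IsLocallyFiniteMeasure μ]
    (hinv : ∀ t, 0 < t → μ.map (anisoDilation t) = μ) :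
    μ {0}ᶜ = 0 := by
  have hfin : μ (homGauge ⁻¹' Ioo 0 1) ≠ ∞ :=
    (measure_mono fun x hx => mem_closedBall_zero_iff.mpr
      (norm_le_one_of_homGauge_le_one (le_of_lt hx.2))).trans_lt measure_closedBall_lt_top |>.ne
  have hcompl : ({0}ᶜ : Set (E × F)) = homGauge ⁻¹' Ioi 0 := by
    ext x
    exact homGauge_pos_iff.symm
  rw [hcompl]
  exact measure_preimage_Ioi_eq_zero_of_forall_measure_preimage_Ioo_eq
    continuous_homGauge.measurable hfin fun r hr => measure_homGauge_preimage_Ioo_eq hinv hr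

end AnisotropicDilation

theorem stmt8_general (p q : ℕ)
    (μ : Measure (EuclideanSpace ℝ (Fin p) × EuclideanSpace ℝ (Fin q)))
    [IsLocallyFiniteMeasure μ]
    (hinv : ∀ t : ℝ, 0 < t →
      Measure.map (fun x : EuclideanSpace ℝ (Fin p) × EuclideanSpace ℝ (Fin q) =>
        (t • x.1, (t ^ 2) • x.2)) μ = μ) :
    ∃ c : ℝ≥0∞, μ = c • Measure.dirac 0 :=
  ⟨μ {0}, Measure.eq_smul_dirac_of_measure_compl_singleton_eq_zero
    (measure_compl_zero_eq_zero_of_map_anisoDilation_eq hinv)⟩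

/-- A locally finite nonnegative Borel measure on `ℝ^p × ℝ^q`
(`p + q ≥ 1`) invariant under all anisotropic dilations `D_t(u,v) = (tu, t²v)`, `t > 0`,
is a nonnegative multiple of the Dirac measure at the origin. -/
theorem stmt8 (p q : ℕ) (hpq : 1 ≤ p + q)
    (μ : Measure (EuclideanSpace ℝ (Fin p) × EuclideanSpace ℝ (Fin q)))
    [IsLocallyFiniteMeasure μ]
    (hinv : ∀ t : ℝ, 0 < t →
      Measure.map (fun x : EuclideanSpace ℝ (Fin p) × EuclideanSpace ℝ (Fin q) =>
        (t • x.1, (t ^ 2) • x.2)) μ = μ) :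
    ∃ c : ℝ≥0∞, μ = c • Measure.dirac 0 :=
  stmt8_general p q μ hinv
end

section
/- Abstract open-cell lemma for the Weyl element: let G be a group with subgroups N̄, M, A, N and unique decomposition g = n̄(g) m(g) a(g) n for g in the open cell Ω = N̄MAN. Let w ∈ G be an element normalizing M and A, with μ := w² ∈ M, such that w·a·w^{-1} = a^{-1} for all a ∈ A. Then for every ν̄ ∈ N̄ with w ν̄ ∈ Ω and w·n̄(w ν̄) ∈ Ω, one has: (i) n̄(w·n̄(w ν̄)) = μ ν̄ μ^{-1}; (ii) m(w·n̄(w ν̄)) = μ · m(w ν̄)^{-1}; (iii) a(w·n̄(w ν̄)) = a(w ν̄)^{-1}. -/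
/-!
Write `wν' = x m a n` with `x = n̄(wν')`, `m = m(wν')`, `a = a(wν')`. Solving for `x` and
multiplying by `w` gives `w x = w² ν' n⁻¹ a⁻¹ m⁻¹`, and since `m` and `a` commute this regroups
as `(μ ν' μ⁻¹) (μ m⁻¹) a⁻¹ (m (a n⁻¹ a⁻¹) m⁻¹)` with `μ = w²`, a product of factors in
`N̄, M, A, N` respectively. Uniqueness of the decomposition then reads off the components.
-/

section OpenCell

variable {G : Type*} [Group G]

theorem mul_eq_conj_mul_mul_mul_of_eq {w ν x m a n : G} (hma : Commute m a)
    (h : w * ν = x * m * a * n) :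
    w * x = (w * w) * ν * (w * w)⁻¹ * ((w * w) * m⁻¹) * a⁻¹ * (m * (a * n⁻¹ * a⁻¹) * m⁻¹) := by
  have hx : x = w * ν * n⁻¹ * a⁻¹ * m⁻¹ := by rw [h]; group
  have hcomm : m⁻¹ * a⁻¹ * m * a = 1 := by
    rw [mul_assoc, hma.eq, ← mul_inv_rev, inv_mul_cancel]
  calc w * x = (w * w) * ν * (m⁻¹ * a⁻¹ * m * a) * n⁻¹ * a⁻¹ * m⁻¹ := by
        rw [hx, hcomm]; group
    _ = _ := by group

variable (Nb Mm Aa Nn : Subgroup G) (Ω : Set G) (nb mm aa : G → G)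

theorem components_eq_of_eq_mul
    (huniq : ∀ x x' m m' a a' n n' : G, x ∈ Nb → x' ∈ Nb → m ∈ Mm → m' ∈ Mm →
      a ∈ Aa → a' ∈ Aa → n ∈ Nn → n' ∈ Nn →
      x * m * a * n = x' * m' * a' * n' → x = x' ∧ m = m' ∧ a = a' ∧ n = n')
    (hdec : ∀ g ∈ Ω, nb g ∈ Nb ∧ mm g ∈ Mm ∧ aa g ∈ Aa ∧
      ∃ n ∈ Nn, g = nb g * mm g * aa g * n)
    {g x m a n : G} (hg : g ∈ Ω) (hx : x ∈ Nb) (hm : m ∈ Mm) (ha : a ∈ Aa) (hn : n ∈ Nn)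
    (h : g = x * m * a * n) :
    nb g = x ∧ mm g = m ∧ aa g = a := by
  obtain ⟨hxg, hmg, hag, n', hn', hg'⟩ := hdec g hg
  obtain ⟨rfl, rfl, rfl, -⟩ :=
    huniq _ _ _ _ _ _ _ _ hxg hx hmg hm hag ha hn' hn (hg'.symm.trans h)
  exact ⟨rfl, rfl, rfl⟩

end OpenCell

theorem stmt12_general {G : Type*} [Group G]
    (Nb Mm Aa Nn : Subgroup G)
    (Ω : Set G)
    (huniq : ∀ x x' m m' a a' n n' : G, x ∈ Nb → x' ∈ Nb → m ∈ Mm → m' ∈ Mm →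
      a ∈ Aa → a' ∈ Aa → n ∈ Nn → n' ∈ Nn →
      x * m * a * n = x' * m' * a' * n' → x = x' ∧ m = m' ∧ a = a' ∧ n = n')
    (nb mm aa : G → G)
    (hdec : ∀ g ∈ Ω, nb g ∈ Nb ∧ mm g ∈ Mm ∧ aa g ∈ Aa ∧
      ∃ n ∈ Nn, g = nb g * mm g * aa g * n)
    (hMA : ∀ m ∈ Mm, ∀ a ∈ Aa, m * a = a * m)
    (hMNb : ∀ m ∈ Mm, ∀ x ∈ Nb, m * x * m⁻¹ ∈ Nb)
    (hMN : ∀ m ∈ Mm, ∀ n ∈ Nn, m * n * m⁻¹ ∈ Nn)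
    (hAN : ∀ a ∈ Aa, ∀ n ∈ Nn, a * n * a⁻¹ ∈ Nn)
    (w : G) (hw2 : w * w ∈ Mm)
    (ν' : G) (hν' : ν' ∈ Nb) (h1 : w * ν' ∈ Ω) (h2 : w * nb (w * ν') ∈ Ω) :
    nb (w * nb (w * ν')) = (w * w) * ν' * (w * w)⁻¹ ∧
    mm (w * nb (w * ν')) = (w * w) * (mm (w * ν'))⁻¹ ∧
    aa (w * nb (w * ν')) = (aa (w * ν'))⁻¹ := by
  obtain ⟨-, hm, ha, n, hn, hdec₁⟩ := hdec _ h1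
  exact components_eq_of_eq_mul Nb Mm Aa Nn Ω nb mm aa huniq hdec h2
    (hMNb _ hw2 _ hν') (mul_mem hw2 (inv_mem hm)) (inv_mem ha)
    (hMN _ hm _ (hAN _ ha _ (inv_mem hn)))
    (mul_eq_conj_mul_mul_mul_of_eq (hMA _ hm _ ha) hdec₁)

/-- **abstract open-cell lemma for the Weyl element.** In a group `G` with
subgroups `N̄, M, A, N`, open cell `Ω = N̄MAN` with unique decomposition and component maps
`n̄, m, a`, and a Weyl element `w` normalizing `M`, inverting `A` by conjugation, with
`μ := w² ∈ M`, one has for `ν' ∈ N̄` with `wν' ∈ Ω` and `w·n̄(wν') ∈ Ω`: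
(i) `n̄(w·n̄(wν')) = μ ν' μ⁻¹`; (ii) `m(w·n̄(wν')) = μ·m(wν')⁻¹`; (iii) `a(w·n̄(wν')) = a(wν')⁻¹`. -/
theorem stmt12 {G : Type*} [Group G]
    (Nb Mm Aa Nn : Subgroup G)
    (Ω : Set G)
    (hΩ : Ω = {g : G | ∃ x ∈ Nb, ∃ m ∈ Mm, ∃ a ∈ Aa, ∃ n ∈ Nn, g = x * m * a * n})
    (huniq : ∀ x x' m m' a a' n n' : G, x ∈ Nb → x' ∈ Nb → m ∈ Mm → m' ∈ Mm →
      a ∈ Aa → a' ∈ Aa → n ∈ Nn → n' ∈ Nn →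
      x * m * a * n = x' * m' * a' * n' → x = x' ∧ m = m' ∧ a = a' ∧ n = n')
    (nb mm aa : G → G)
    (hdec : ∀ g ∈ Ω, nb g ∈ Nb ∧ mm g ∈ Mm ∧ aa g ∈ Aa ∧
      ∃ n ∈ Nn, g = nb g * mm g * aa g * n)
    (hMA : ∀ m ∈ Mm, ∀ a ∈ Aa, m * a = a * m)
    (hMNb : ∀ m ∈ Mm, ∀ x ∈ Nb, m * x * m⁻¹ ∈ Nb)
    (hMN : ∀ m ∈ Mm, ∀ n ∈ Nn, m * n * m⁻¹ ∈ Nn)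
    (hANb : ∀ a ∈ Aa, ∀ x ∈ Nb, a * x * a⁻¹ ∈ Nb)
    (hAN : ∀ a ∈ Aa, ∀ n ∈ Nn, a * n * a⁻¹ ∈ Nn)
    (w : G) (hw2 : w * w ∈ Mm)
    (hwM : ∀ m ∈ Mm, w * m * w⁻¹ ∈ Mm)
    (hwA : ∀ a ∈ Aa, w * a * w⁻¹ = a⁻¹)
    (ν' : G) (hν' : ν' ∈ Nb) (h1 : w * ν' ∈ Ω) (h2 : w * nb (w * ν') ∈ Ω) :
    nb (w * nb (w * ν')) = (w * w) * ν' * (w * w)⁻¹ ∧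
    mm (w * nb (w * ν')) = (w * w) * (mm (w * ν'))⁻¹ ∧
    aa (w * nb (w * ν')) = (aa (w * ν'))⁻¹ :=
  stmt12_general Nb Mm Aa Nn Ω huniq nb mm aa hdec hMA hMNb hMN hAN w hw2 ν' hν' h1 h2
end
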